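/- For every n ≥ 2 and every monomial x₁^{(i₁)}⋯xₙ^{(iₙ)}·x_{n+1}·x_{n+2} with i₁+⋯+iₙ = n (multilinear of degree n+2 with deg − d = 2), its derivative D(x₁^{(i₁)}⋯xₙ^{(iₙ)}x_{n+1}x_{n+2}) lies in the smallest subspace of F{X} containing X and closed under the product a ∘ b = D(ab). -/
import Mathlib

open MvPolynomial

/-- The derivation `D` on the differential polynomial ring in variables `x₁,…,x_{n+2}`,
modelled as `MvPolynomial (Fin (n+2) × ℕ) F` with `x_j^{(i)} = X (j, i)`. -/
noncomputable def Dn (F : Type*) [Field F] (m : ℕ) :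
    Derivation F (MvPolynomial (Fin m × ℕ) F) (MvPolynomial (Fin m × ℕ) F) :=
  mkDerivation F fun p => X (p.1, p.2 + 1)

section Key

variable {F : Type*} [Field F] [CharZero F] {R : Type*} [CommRing R] [Algebra F R]

private lemma leib (D : Derivation F R R) (k : ℕ) (a b : R) :
    (⇑D)^[k] (a * b) = ∑ μ ∈ Finset.range (k + 1),
      (k.choose μ : F) • ((⇑D)^[μ] a * (⇑D)^[k - μ] b) := by
  induction k with
  | zero => simp
  | succ k ih =>
    rw [Function.iterate_succ_apply', ih, map_sum]
    have step : ∀ μ ∈ Finset.range (k + 1),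
        D ((k.choose μ : F) • ((⇑D)^[μ] a * (⇑D)^[k - μ] b)) =
        (k.choose μ : F) • ((⇑D)^[μ + 1] a * (⇑D)^[k - μ] b)
          + (k.choose μ : F) • ((⇑D)^[μ] a * (⇑D)^[k + 1 - μ] b) := by
      intro μ hμ
      have hμk : μ ≤ k := by simpa [Nat.lt_succ_iff] using hμ
      have h1 : k + 1 - μ = (k - μ) + 1 := by omega
      rw [D.map_smul, Derivation.leibniz, smul_eq_mul, smul_eq_mul, smul_add, h1,
        Function.iterate_succ_apply', Function.iterate_succ_apply']
      ring_nf
    rw [Finset.sum_congr rfl step, Finset.sum_add_distrib]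
    -- now RHS target
    rw [Finset.sum_range_succ' (fun μ => ((k+1).choose μ : F) •
        ((⇑D)^[μ] a * (⇑D)^[k + 1 - μ] b)) (k+1)]
    have hre : ∀ μ ∈ Finset.range (k + 1),
        (((k+1).choose (μ+1) : F)) • ((⇑D)^[μ+1] a * (⇑D)^[k + 1 - (μ+1)] b)
        = (k.choose μ : F) • ((⇑D)^[μ + 1] a * (⇑D)^[k - μ] b)
          + (k.choose (μ+1) : F) • ((⇑D)^[μ + 1] a * (⇑D)^[k - μ] b) := by
      intro μ hμ
      have h2 : k + 1 - (μ + 1) = k - μ := by omega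
      rw [h2, Nat.choose_succ_succ', Nat.cast_add, add_smul]
    rw [Finset.sum_congr rfl hre, Finset.sum_add_distrib]
    have hB : ∑ μ ∈ Finset.range (k + 1),
        (k.choose μ : F) • ((⇑D)^[μ] a * (⇑D)^[k + 1 - μ] b)
        = ∑ μ ∈ Finset.range (k + 1),
            (k.choose (μ+1) : F) • ((⇑D)^[μ + 1] a * (⇑D)^[k - μ] b)
          + ((k+1).choose 0 : F) • ((⇑D)^[0] a * (⇑D)^[k + 1 - 0] b) := by
      rw [Finset.sum_range_succ' (fun μ => (k.choose μ : F) •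
          ((⇑D)^[μ] a * (⇑D)^[k + 1 - μ] b)) k]
      rw [Finset.sum_range_succ (fun μ => (k.choose (μ+1) : F) •
          ((⇑D)^[μ + 1] a * (⇑D)^[k - μ] b)) k]
      have h3 : ∀ μ ∈ Finset.range k,
          (k.choose (μ+1) : F) • ((⇑D)^[μ+1] a * (⇑D)^[k + 1 - (μ+1)] b)
          = (k.choose (μ+1) : F) • ((⇑D)^[μ + 1] a * (⇑D)^[k - μ] b) := by
        intro μ hμ
        have h2 : k + 1 - (μ + 1) = k - μ := by omega
        rw [h2]
      rw [Finset.sum_congr rfl h3]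
      simp [Nat.choose_succ_self]
    rw [hB]
    ring

private lemma aux_card_le_sum (u : Multiset (R × ℕ)) (h : ∀ q ∈ u, q.2 ≠ 0) :
    Multiset.card u ≤ (u.map Prod.snd).sum := by
  induction u using Multiset.induction with
  | empty => simp
  | cons a t ih =>
    simp only [Multiset.map_cons, Multiset.sum_cons, Multiset.card_cons]
    have h1 := h a (by simp)
    have h2 := ih (fun q hq => h q (by simp [hq]))
    omega

private lemma key (D : Derivation F R R) (S : Submodule F R)
    (hS : ∀ a b, a ∈ S → b ∈ S → D (a * b) ∈ S) :
    ∀ (r N : ℕ) (s : Multiset (R × ℕ)),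
      Multiset.card s = r →
      (s.map fun p => p.2 * p.2).sum = N →
      (s.map Prod.snd).sum + 2 = r →
      (∀ p ∈ s, p.1 ∈ S) →
      D ((s.map fun p => (⇑D)^[p.2] p.1).prod) ∈ S := by
  intro r
  induction r using Nat.strong_induction_on with
  | _ r ihr =>
  intro N
  induction N using Nat.strong_induction_on with
  | _ N ihN =>
  intro s hcard hN hsum hmem
  by_cases h0 : (s.map Prod.snd).sum = 0
  · -- base case: r = 2, both exponents 0
    have hr2 : Multiset.card s = 2 := by omega
    obtain ⟨x, y, rfl⟩ := Multiset.card_eq_two.mp hr2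
    have hxy : x.2 = 0 ∧ y.2 = 0 := by
      simp only [Multiset.insert_eq_cons, Multiset.map_cons, Multiset.map_singleton,
        Multiset.sum_cons, Multiset.sum_singleton] at h0
      omega
    have hx := hmem x (by simp)
    have hy := hmem y (by simp)
    simp only [Multiset.insert_eq_cons, Multiset.map_cons, Multiset.map_singleton,
      Multiset.prod_cons, Multiset.prod_singleton, hxy.1, hxy.2,
      Function.iterate_zero, id_eq]
    exact hS x.1 y.1 hx hy
  · -- main case
    have hrel : ∀ (a b : R) (j : ℕ) (t : Multiset (R × ℕ)),
        a ∈ S → b ∈ S → (∀ p ∈ t, p.1 ∈ S) →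
        Multiset.card t + 2 = r →
        j + (t.map Prod.snd).sum + 3 = r →
        ∑ μ ∈ Finset.range (j + 2), ((j+1).choose μ : F) •
          D ((⇑D)^[μ] a * (⇑D)^[j+1-μ] b * (t.map fun p => (⇑D)^[p.2] p.1).prod) ∈ S := by
      intro a b j t haS hbS htS hct hjt
      have h1 := ihr (r-1) (by omega)
        ((((D (a*b), j) ::ₘ t).map fun p => p.2 * p.2).sum)
        ((D (a*b), j) ::ₘ t)
        (by simp only [Multiset.card_cons]; omega) rfl
        (by simp only [Multiset.map_cons, Multiset.sum_cons]; omega)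
        (by
          intro p hp
          rcases Multiset.mem_cons.mp hp with h | h
          · rw [h]; exact hS a b haS hbS
          · exact htS p h)
      rw [Multiset.map_cons, Multiset.prod_cons] at h1
      have h2 : (⇑D)^[(D (a*b), j).2] (D (a*b), j).1 = (⇑D)^[j+1] (a*b) :=
        (Function.iterate_succ_apply (⇑D) j (a*b)).symm
      rw [h2, leib D (j+1) a b, Finset.sum_mul] at h1
      simp only [smul_mul_assoc] at h1
      rw [map_sum] at h1
      simp only [D.map_smul] at h1
      exact h1
    -- find an element with positive exponent
    have hex : ∃ p ∈ s, p.2 ≠ 0 := by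
      by_contra h
      push_neg at h
      refine h0 (Multiset.sum_eq_zero ?_)
      intro x hx
      obtain ⟨p, hp, rfl⟩ := Multiset.mem_map.mp hx
      exact h p hp
    obtain ⟨p, hps, hp2⟩ := hex
    obtain ⟨s₀, rfl⟩ := Multiset.exists_cons_of_mem hps
    -- find two elements with exponent zero in s₀
    have h2z : 2 ≤ Multiset.card (s₀.filter (fun q => q.2 = 0)) := by
      have hsplit := Multiset.filter_add_not (fun q => q.2 = 0) s₀
      have hcu : Multiset.card (s₀.filter (fun q => ¬ q.2 = 0)) ≤
          ((s₀.filter (fun q => ¬ q.2 = 0)).map Prod.snd).sum :=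
        aux_card_le_sum _ (fun q hq => (Multiset.mem_filter.mp hq).2)
      have hsum0 : ((s₀.filter (fun q => q.2 = 0)).map Prod.snd).sum = 0 :=
        Multiset.sum_eq_zero (by
          intro x hx
          obtain ⟨q, hq, rfl⟩ := Multiset.mem_map.mp hx
          exact (Multiset.mem_filter.mp hq).2)
      have hcards := congrArg Multiset.card hsplit
      have hsums := congrArg (fun m => (Multiset.map Prod.snd m).sum) hsplit
      simp only [Multiset.card_add] at hcards
      simp only [Multiset.map_add, Multiset.sum_add] at hsums
      simp only [Multiset.map_cons, Multiset.sum_cons, Multiset.card_cons] at hsum hcard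
      omega
    obtain ⟨q, hq⟩ := Multiset.card_pos_iff_exists_mem.mp (by omega :
      0 < Multiset.card (s₀.filter (fun q => q.2 = 0)))
    have hq0 : q.2 = 0 := (Multiset.mem_filter.mp hq).2
    obtain ⟨s₁, rfl⟩ := Multiset.exists_cons_of_mem (Multiset.mem_filter.mp hq).1
    have h1z : 1 ≤ Multiset.card (s₁.filter (fun q => q.2 = 0)) := by
      rw [Multiset.filter_cons_of_pos (p := fun q => q.2 = 0) s₁ hq0, Multiset.card_cons] at h2z
      omega
    obtain ⟨q', hq'⟩ := Multiset.card_pos_iff_exists_mem.mp (by omega :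
      0 < Multiset.card (s₁.filter (fun q => q.2 = 0)))
    have hq'0 : q'.2 = 0 := (Multiset.mem_filter.mp hq').2
    obtain ⟨s₃, rfl⟩ := Multiset.exists_cons_of_mem (Multiset.mem_filter.mp hq').1
    obtain ⟨i, hi⟩ : ∃ i, p.2 = i + 1 := ⟨p.2 - 1, by omega⟩
    -- stats
    simp only [Multiset.map_cons, Multiset.sum_cons, Multiset.card_cons] at hsum hcard hN
    rw [hi, hq0, hq'0] at hN hsum
    have hmemp : p.1 ∈ S := hmem p (by simp)
    have hmemq : q.1 ∈ S := hmem q (by simp)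
    have hmemq' : q'.1 ∈ S := hmem q' (by simp)
    have hmem₃ : ∀ x ∈ s₃, x.1 ∈ S := fun x hx => hmem x (by simp [hx])
    set T : R := (s₃.map fun p => (⇑D)^[p.2] p.1).prod with hT
    have R1 := hrel p.1 q.1 i (q' ::ₘ s₃) hmemp hmemq
      (by
        intro x hx
        rcases Multiset.mem_cons.mp hx with h | h
        · rw [h]; exact hmemq'
        · exact hmem₃ x h)
      (by simp only [Multiset.card_cons]; omega)
      (by simp only [Multiset.map_cons, Multiset.sum_cons]; omega)
    have R2 := hrel p.1 q'.1 i (q ::ₘ s₃) hmemp hmemq'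
      (by
        intro x hx
        rcases Multiset.mem_cons.mp hx with h | h
        · rw [h]; exact hmemq
        · exact hmem₃ x h)
      (by simp only [Multiset.card_cons]; omega)
      (by simp only [Multiset.map_cons, Multiset.sum_cons]; omega)
    have R3 := hrel q.1 q'.1 i ((p.1, 0) ::ₘ s₃) hmemq hmemq'
      (by
        intro x hx
        rcases Multiset.mem_cons.mp hx with h | h
        · rw [h]; exact hmemp
        · exact hmem₃ x h)
      (by simp only [Multiset.card_cons]; omega)
      (by simp only [Multiset.map_cons, Multiset.sum_cons]; omega)
    simp only [Multiset.map_cons, Multiset.prod_cons, hq0, hq'0, Function.iterate_zero,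
      id_eq, ← hT] at R1 R2 R3
    -- membership of the middle terms
    have hmid : ∀ (a b c : R), a ∈ S → b ∈ S → c ∈ S → ∀ μ : ℕ, μ < i →
        D ((⇑D)^[μ+1] a * (⇑D)^[i-μ] b * (c * T)) ∈ S := by
      intro a b c ha hb hc μ hμ
      obtain ⟨d, hd⟩ := Nat.exists_eq_add_of_lt hμ
      have h := ihN ((Multiset.map (fun p => p.2 * p.2)
          ((a, μ+1) ::ₘ (b, i-μ) ::ₘ (c, 0) ::ₘ s₃)).sum)
        (by
          simp only [Multiset.map_cons, Multiset.sum_cons]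
          have hlt : (μ+1) * (μ+1) + (i-μ) * (i-μ) < (i+1) * (i+1) := by
            have h2 : i - μ = d + 1 := by omega
            rw [h2, hd]
            nlinarith
          omega)
        ((a, μ+1) ::ₘ (b, i-μ) ::ₘ (c, 0) ::ₘ s₃)
        (by simp only [Multiset.card_cons]; omega)
        rfl
        (by simp only [Multiset.map_cons, Multiset.sum_cons]; omega)
        (by
          intro x hx
          rcases Multiset.mem_cons.mp hx with h | hx
          · rw [h]; exact ha
          rcases Multiset.mem_cons.mp hx with h | hx
          · rw [h]; exact hb
          rcases Multiset.mem_cons.mp hx with h | hx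
          · rw [h]; exact hc
          · exact hmem₃ x hx)
      simp only [Multiset.map_cons, Multiset.prod_cons, Function.iterate_zero, id_eq,
        ← hT] at h
      have e : (⇑D)^[μ+1] a * (⇑D)^[i-μ] b * (c * T)
          = (⇑D)^[μ+1] a * ((⇑D)^[i-μ] b * (c * T)) := by ring
      rw [e]
      exact h
    have hM : ∀ (a b c : R), a ∈ S → b ∈ S → c ∈ S →
        ∑ μ ∈ Finset.range i, ((i+1).choose (μ+1) : F) •
          D ((⇑D)^[μ+1] a * (⇑D)^[i+1-(μ+1)] b * (c * T)) ∈ S := by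
      intro a b c ha hb hc
      refine Submodule.sum_mem _ (fun μ hμ => S.smul_mem _ ?_)
      have h2 : i + 1 - (μ + 1) = i - μ := by omega
      rw [h2]
      exact hmid a b c ha hb hc μ (Finset.mem_range.mp hμ)
    rw [Finset.sum_range_succ, Finset.sum_range_succ'] at R1 R2 R3
    have hB1 : D ((⇑D)^[0] p.1 * (⇑D)^[i+1-0] q.1 * (q'.1 * T))
        + D ((⇑D)^[i+1] p.1 * (⇑D)^[i+1-(i+1)] q.1 * (q'.1 * T)) ∈ S := by
      have h := S.sub_mem R1 (hM p.1 q.1 q'.1 hmemp hmemq hmemq')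
      have e : (((i+1).choose 0 : F) • D ((⇑D)^[0] p.1 * (⇑D)^[i+1-0] q.1 * (q'.1 * T)))
          = D ((⇑D)^[0] p.1 * (⇑D)^[i+1-0] q.1 * (q'.1 * T)) := by
        simp
      have e2 : (((i+1).choose (i+1) : F) •
            D ((⇑D)^[i+1] p.1 * (⇑D)^[i+1-(i+1)] q.1 * (q'.1 * T)))
          = D ((⇑D)^[i+1] p.1 * (⇑D)^[i+1-(i+1)] q.1 * (q'.1 * T)) := by
        simp
      rw [e, e2] at h
      convert h using 1
      abel
    have hB2 : D ((⇑D)^[0] p.1 * (⇑D)^[i+1-0] q'.1 * (q.1 * T))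
        + D ((⇑D)^[i+1] p.1 * (⇑D)^[i+1-(i+1)] q'.1 * (q.1 * T)) ∈ S := by
      have h := S.sub_mem R2 (hM p.1 q'.1 q.1 hmemp hmemq' hmemq)
      have e : (((i+1).choose 0 : F) • D ((⇑D)^[0] p.1 * (⇑D)^[i+1-0] q'.1 * (q.1 * T)))
          = D ((⇑D)^[0] p.1 * (⇑D)^[i+1-0] q'.1 * (q.1 * T)) := by
        simp
      have e2 : (((i+1).choose (i+1) : F) •
            D ((⇑D)^[i+1] p.1 * (⇑D)^[i+1-(i+1)] q'.1 * (q.1 * T)))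
          = D ((⇑D)^[i+1] p.1 * (⇑D)^[i+1-(i+1)] q'.1 * (q.1 * T)) := by
        simp
      rw [e, e2] at h
      convert h using 1
      abel
    have hB3 : D ((⇑D)^[0] q.1 * (⇑D)^[i+1-0] q'.1 * (p.1 * T))
        + D ((⇑D)^[i+1] q.1 * (⇑D)^[i+1-(i+1)] q'.1 * (p.1 * T)) ∈ S := by
      have h := S.sub_mem R3 (hM q.1 q'.1 p.1 hmemq hmemq' hmemp)
      have e : (((i+1).choose 0 : F) • D ((⇑D)^[0] q.1 * (⇑D)^[i+1-0] q'.1 * (p.1 * T)))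
          = D ((⇑D)^[0] q.1 * (⇑D)^[i+1-0] q'.1 * (p.1 * T)) := by
        simp
      have e2 : (((i+1).choose (i+1) : F) •
            D ((⇑D)^[i+1] q.1 * (⇑D)^[i+1-(i+1)] q'.1 * (p.1 * T)))
          = D ((⇑D)^[i+1] q.1 * (⇑D)^[i+1-(i+1)] q'.1 * (p.1 * T)) := by
        simp
      rw [e, e2] at h
      convert h using 1
      abel
    simp only [Function.iterate_zero, id_eq, Nat.sub_zero, Nat.sub_self] at hB1 hB2 hB3
    -- combine: hB1 + hB2 - hB3 = 2 * target
    have hsum2 : D ((⇑D)^[i+1] p.1 * (q.1 * (q'.1 * T)))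
        + D ((⇑D)^[i+1] p.1 * (q.1 * (q'.1 * T))) ∈ S := by
      have h := S.sub_mem (S.add_mem hB1 hB2) hB3
      have e1 : p.1 * (⇑D)^[i+1] q.1 * (q'.1 * T)
          = (⇑D)^[i+1] q.1 * q'.1 * (p.1 * T) := by ring
      have e2 : p.1 * (⇑D)^[i+1] q'.1 * (q.1 * T)
          = q.1 * (⇑D)^[i+1] q'.1 * (p.1 * T) := by ring
      have e3 : (⇑D)^[i+1] p.1 * q.1 * (q'.1 * T)
          = (⇑D)^[i+1] p.1 * (q.1 * (q'.1 * T)) := by ring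
      have e4 : (⇑D)^[i+1] p.1 * q'.1 * (q.1 * T)
          = (⇑D)^[i+1] p.1 * (q.1 * (q'.1 * T)) := by ring
      rw [e1, e2, e3, e4] at h
      convert h using 1
      abel
    simp only [Multiset.map_cons, Multiset.prod_cons, hq0, hq'0, hi, Function.iterate_zero,
      id_eq, ← hT]
    have h2smul : (2 : F) • D ((⇑D)^[i+1] p.1 * (q.1 * (q'.1 * T))) ∈ S := by
      rw [two_smul]; exact hsum2
    have hfin := S.smul_mem ((2 : F)⁻¹) h2smul
    rwa [smul_smul, inv_mul_cancel₀ (two_ne_zero), one_smul] at hfin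

end Key

/-- for `n ≥ 2` and any exponents `i₁ + ⋯ + iₙ = n`, the derivative
`D(x₁^{(i₁)}⋯xₙ^{(iₙ)}·x_{n+1}·x_{n+2})` lies in every subspace of `F{X}` that contains
the variables `X` and is closed under `a ∘ b := D(ab)` — i.e. it lies in the smallest
such subspace `S⟨X⟩`. -/
theorem stmt14 (F : Type*) [Field F] [CharZero F] (n : ℕ) (hn : 2 ≤ n)
    (i : Fin n → ℕ) (hi : ∑ j, i j = n)
    (S : Submodule F (MvPolynomial (Fin (n + 2) × ℕ) F))
    (hX : ∀ j : Fin (n + 2), X (j, 0) ∈ S)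
    (hclosed : ∀ a b, a ∈ S → b ∈ S → Dn F (n + 2) (a * b) ∈ S) :
    Dn F (n + 2)
        ((∏ j : Fin n, X (Fin.castAdd 2 j, i j)) *
          X (Fin.natAdd n (0 : Fin 2), 0) * X (Fin.natAdd n (1 : Fin 2), 0)) ∈ S := by
  classical
  have hx : ∀ (v : Fin (n+2) × ℕ) , True := fun _ => trivial
  have hiter : ∀ (v : Fin (n+2)) (e : ℕ),
      (⇑(Dn F (n+2)))^[e] (X (v, 0)) = X (v, e) := by
    intro v e
    induction e with
    | zero => rfl
    | succ e ih =>
      rw [Function.iterate_succ_apply', ih]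
      show Dn F (n+2) (X (v, e)) = _
      unfold Dn
      rw [mkDerivation_X]
  set s : Multiset (MvPolynomial (Fin (n + 2) × ℕ) F × ℕ) :=
    (X (Fin.natAdd n (0 : Fin 2), 0), 0) ::ₘ (X (Fin.natAdd n (1 : Fin 2), 0), 0) ::ₘ
      ((Finset.univ : Finset (Fin n)).val.map
        (fun j => ((X (Fin.castAdd 2 j, 0) : MvPolynomial (Fin (n + 2) × ℕ) F), i j)))
    with hs
  have hcard : Multiset.card s = n + 2 := by
    simp [hs]
  have hsumS : (s.map Prod.snd).sum + 2 = n + 2 := by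
    simp only [hs, Multiset.map_cons, Multiset.sum_cons, Multiset.map_map]
    rw [show ((Finset.univ : Finset (Fin n)).val.map
      (Prod.snd ∘ fun j => ((X (Fin.castAdd 2 j, 0) : MvPolynomial (Fin (n + 2) × ℕ) F),
        i j))).sum = ∑ j : Fin n, i j from (Finset.sum_eq_multiset_sum _ _).symm]
    omega
  have hmemS : ∀ p ∈ s, p.1 ∈ S := by
    intro p hp
    simp only [hs, Multiset.mem_cons, Multiset.mem_map] at hp
    rcases hp with h | h | ⟨j, _, h⟩
    · rw [h]; exact hX _
    · rw [h]; exact hX _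
    · rw [← h]; exact hX _
  have hk := key (Dn F (n+2)) S hclosed (n+2)
    ((s.map fun p => p.2 * p.2).sum) s hcard rfl hsumS hmemS
  have harg : ((s.map fun p => (⇑(Dn F (n+2)))^[p.2] p.1).prod)
      = (∏ j : Fin n, X (Fin.castAdd 2 j, i j)) *
          X (Fin.natAdd n (0 : Fin 2), 0) * X (Fin.natAdd n (1 : Fin 2), 0) := by
    simp only [hs, Multiset.map_cons, Multiset.prod_cons, Multiset.map_map,
      Function.iterate_zero, id_eq, Function.comp]
    rw [show ((Finset.univ : Finset (Fin n)).val.map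
        (fun j => (⇑(Dn F (n+2)))^[i j] (X (Fin.castAdd 2 j, 0)))).prod
      = ∏ j : Fin n, (⇑(Dn F (n+2)))^[i j] (X (Fin.castAdd 2 j, 0)) from
        (Finset.prod_eq_multiset_prod _ _).symm]
    rw [Finset.prod_congr rfl (fun j _ => hiter (Fin.castAdd 2 j) (i j))]
    ring
  rwa [harg] at hk
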